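/- For every subshift Σ, Keller's boundary capacity satisfies cap(Σ) ≥ h_𝒞(Σ). Moreover, there exists a subshift for which this inequality is strict: cap(Σ) > h_𝒞(Σ). -/

import Mathlib

/-!
If `a t` is a left constraint, a past witnessing `fol(a t) ≠ ∅` puts `t` in `σ₊[a]₊`, while the
past of a point of `fol(t) \ fol(a t)` shows that `t` also occurs outside `σ₊[a]₊`. So every tail
of a left constraint is counted in `cap` with `r = 1`, whence `#𝒞(Σ, n + 1) ≤ #𝒜 · M(n)` for the
supremum `M(n)` in the definition of `cap`, and `h_𝒞 ≤ cap`.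

For strictness, take the subshift on `{0, 1, 2}` in which, after a `2`, every offset outside the
sparse set `S = ⋃ₖ [4ᵏ, 4ᵏ + k)` carries a `0` and every offset in `S` a letter other than `2`.
A left constraint starts with `2` and is determined by its letters at offsets in `S`, which are at
most half of all offsets, so `h_𝒞 ≤ (log 2) / 2`. On the other hand every word of `{0, 1}ⁿ` can
follow the marker `2 0 ⋯ 0` of length `4ⁿ`, and can also be followed by a `1` at offset `n`,
which that marker forbids; hence `cap ≥ log 2`.
-/

open Filter Set MeasureTheory

namespace QFTPaper

variable {A : Type*} {B : Type*}

/-- The left shift on bi-infinite sequences over the alphabet `A`. -/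
def shift (x : ℤ → A) : ℤ → A := fun n => x (n + 1)

/-- A subshift: a closed, shift-invariant subset of `A^ℤ`. -/
def IsSubshift [TopologicalSpace A] (X : Set (ℤ → A)) : Prop :=
  IsClosed X ∧ shift '' X = X

/-- The finite word `w` occurs in `x` at position `k`. -/
def OccursAt (w : List A) (x : ℤ → A) (k : ℤ) : Prop :=
  ∀ i : Fin w.length, x (k + (i : ℕ)) = w.get i

/-- The language of `X`: words of length `n` occurring in elements of `X`
(at position `0`, which is no restriction by shift-invariance). -/
def Lang (X : Set (ℤ → A)) (n : ℕ) : Set (List A) :=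
  { w | w.length = n ∧ ∃ x ∈ X, OccursAt w x 0 }

/-- Topological entropy of a subshift. -/
noncomputable def hTop (X : Set (ℤ → A)) : ℝ :=
  limsup (fun n : ℕ => Real.log (Nat.card ↥(Lang X n)) / (n : ℝ)) atTop

/-- Follower set of the finite word `w = A₋ₙ…A₀` (listed from `A₋ₙ` to `A₀`):
the set of one-sided sequences `B₀B₁B₂…` with `B ∈ X` and `B₋ₙ…B₀ = A₋ₙ…A₀`,
realized by requiring `w` to occur in `B` at positions `0,…,n` and reading off
the tail of `B` starting at the position of the last letter of `w`.
For the empty word this gives `X₊` (by shift-invariance). -/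
def fol (X : Set (ℤ → A)) (w : List A) : Set (ℕ → A) :=
  { y | ∃ B ∈ X, (∀ i : Fin w.length, B ((i : ℕ) : ℤ) = w.get i) ∧
        ∀ k : ℕ, y k = B ((w.length : ℤ) - 1 + (k : ℤ)) }

/-- `w = A₋ₙ…A₀` is a left constraint:
`∅ ≠ fol(A₋ₙ…A₀) ⊊ fol(A₋ₙ₊₁…A₀)`. -/
def IsLeftConstraint (X : Set (ℤ → A)) (w : List A) : Prop :=
  w ≠ [] ∧ fol X w ≠ ∅ ∧ fol X w ⊂ fol X w.tail

/-- `𝒞(X, n)`: the set of left constraints of length `n`. -/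
def LC (X : Set (ℤ → A)) (n : ℕ) : Set (List A) :=
  { w | w.length = n ∧ IsLeftConstraint X w }

/-- The left constraint entropy `h_𝒞(X) = limsup (1/n) log⁺ #𝒞(X,n)`. -/
noncomputable def hC (X : Set (ℤ → A)) : ℝ :=
  limsup (fun n : ℕ => max 0 (Real.log (Nat.card ↥(LC X n))) / (n : ℝ)) atTop

/-- The time-reversed subshift `X̄`. -/
def rev (X : Set (ℤ → A)) : Set (ℤ → A) :=
  (fun x : ℤ → A => fun n : ℤ => x (-n)) '' X

/-- The symmetric constraint entropy `h_𝒮𝒞(X) = min (h_𝒞(X), h_𝒞(X̄))`. -/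
noncomputable def hSC (X : Set (ℤ → A)) : ℝ := min (hC X) (hC (rev X))

/-- Subshift of quasi-finite type: `h_𝒮𝒞(X) < h_top(X)`. -/
def IsQFT [TopologicalSpace A] (X : Set (ℤ → A)) : Prop :=
  IsSubshift X ∧ hSC X < hTop X

/-- The word `B₋ₘ…B₀` read off from a one-sided past `b` (where `b j = B₋ⱼ`). -/
def wordOf (b : ℕ → A) (m : ℕ) : List A :=
  (List.range (m + 1)).map fun j => b (m - j)

/-- An extendable left constraint: a left constraint `A₋ₙ…A₀` which admits a
one-sided past `B` extending it such that `B₋ₘ…B₀` is again a left constraint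
for infinitely many `m`. -/
def IsExtendable (X : Set (ℤ → A)) (w : List A) : Prop :=
  IsLeftConstraint X w ∧
  ∃ b : ℕ → A, wordOf b (w.length - 1) = w ∧
    ∀ N : ℕ, ∃ m, N ≤ m ∧ IsLeftConstraint X (wordOf b m)

/-- `𝒞*(X, n)`: the set of extendable left constraints of length `n`. -/
def ELC (X : Set (ℤ → A)) (n : ℕ) : Set (List A) :=
  { w | w.length = n ∧ IsExtendable X w }

/-- The extendable left constraint entropy `h*_𝒞(X)`. -/
noncomputable def hCstar (X : Set (ℤ → A)) : ℝ :=
  limsup (fun n : ℕ => Real.log (Nat.card ↥(ELC X n)) / (n : ℝ)) atTop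

/-- `h*_𝒮𝒞(X) = min (h*_𝒞(X), h*_𝒞(X̄))`. -/
noncomputable def hSCstar (X : Set (ℤ → A)) : ℝ := min (hCstar X) (hCstar (rev X))

/-- Subshift of weak quasi-finite type: `h*_𝒮𝒞(X) < h_top(X)`. -/
def IsWeakQFT [TopologicalSpace A] (X : Set (ℤ → A)) : Prop :=
  IsSubshift X ∧ hSCstar X < hTop X

/-- Subshift of finite type: defined by excluding a finite set of finite words. -/
def IsSFT (X : Set (ℤ → A)) : Prop :=
  ∃ F : Finset (List A), X = { x | ∀ w ∈ F, ∀ k : ℤ, ¬ OccursAt w x k }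

/-- Sofic subshift: the image of an SFT under a continuous shift-commuting map. -/
def IsSofic [TopologicalSpace A] (X : Set (ℤ → A)) : Prop :=
  ∃ (B : Type) (_ : Fintype B) (Y : Set (ℤ → B)) (π : (ℤ → B) → (ℤ → A)),
    IsSFT Y ∧
    (letI : TopologicalSpace B := ⊥
     Continuous π) ∧
    (∀ x : ℤ → B, π (shift x) = shift (π x)) ∧ π '' Y = X


/-- Topological conjugacy of subshifts: a homeomorphism commuting with the shifts. -/
def Conjugate [TopologicalSpace A] [TopologicalSpace B]
    (X : Set (ℤ → A)) (Y : Set (ℤ → B)) : Prop :=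
  ∃ φ : X ≃ₜ Y, ∀ x x' : X, (x' : ℤ → A) = shift (x : ℤ → A) →
    (φ x' : ℤ → B) = shift (φ x : ℤ → B)

/-- The cylinder of a word of length `n` placed at positions `0,…,n-1`. -/
def cylSet (n : ℕ) (w : Fin n → A) : Set (ℤ → A) :=
  { x | ∀ i : Fin n, x ((i : ℕ) : ℤ) = w i }

/-- Entropy of the partition of `A^ℤ` into cylinders of length `n`. -/
noncomputable def blockEntropy [Fintype A] [MeasurableSpace A]
    (μ : Measure (ℤ → A)) (n : ℕ) : ℝ :=
  ∑ w : Fin n → A, Real.negMulLog ((μ (cylSet n w)).toReal)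

/-- Kolmogorov–Sinai entropy of a shift-invariant measure on `A^ℤ`,
computed with the natural (generating) partition into cylinders. -/
noncomputable def KSEntropy [Fintype A] [MeasurableSpace A]
    (μ : Measure (ℤ → A)) : ℝ :=
  ⨅ n : ℕ, blockEntropy μ (n + 1) / (n + 1)

/-- A maximum measure: an ergodic shift-invariant Borel probability measure
carried by `X` whose Kolmogorov–Sinai entropy equals the topological entropy of `X`. -/
def IsMaxMeasure [Fintype A] [MeasurableSpace A]
    (X : Set (ℤ → A)) (μ : Measure (ℤ → A)) : Prop :=
  IsProbabilityMeasure μ ∧ μ Xᶜ = 0 ∧ Ergodic shift μ ∧ KSEntropy μ = hTop X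

/-- The number of points of `X` fixed by the `n`-th power of the shift. -/
noncomputable def perCount (X : Set (ℤ → A)) (n : ℕ) : ℕ :=
  Nat.card {x : ℤ → A | x ∈ X ∧ shift^[n] x = x}

/-- The one-sided subshift `X₊`. -/
def plusShift (X : Set (ℤ → A)) : Set (ℕ → A) :=
  { y | ∃ x ∈ X, ∀ k : ℕ, y k = x (k : ℤ) }

/-- The one-sided shift `σ₊`. -/
def shiftP (y : ℕ → A) : ℕ → A := fun n => y (n + 1)

/-- The one-sided cylinder `[w]₊` of a finite word in `X₊`. -/
def cylP (X : Set (ℤ → A)) (w : List A) : Set (ℕ → A) :=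
  { y ∈ plusShift X | ∀ i : Fin w.length, y (i : ℕ) = w.get i }

/-- The set of words counted in Keller's boundary capacity for parameters
`n`, `r`, `w`. -/
def capSet (X : Set (ℤ → A)) (n r : ℕ) (w : List A) : Set (List A) :=
  { a ∈ Lang X n |
      (cylP X a ∩ (shiftP^[r] '' cylP X w)).Nonempty ∧
      (cylP X a ∩ (plusShift X \ shiftP^[r] '' cylP X w)).Nonempty }

/-- Keller's boundary capacity. -/
noncomputable def cap (X : Set (ℤ → A)) : ℝ :=
  limsup (fun n : ℕ =>
    Real.log (sSup { c : ℝ | ∃ r : ℕ, 1 ≤ r ∧ ∃ w ∈ Lang X r,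
      c = (Nat.card ↥(capSet X n r w) : ℝ) }) / (n : ℝ)) atTop

lemma limsup_le_limsup_of_succ_le_add_div {u v : ℕ → ℝ} {c C : ℝ} (hu : ∀ n, 0 ≤ u n)
    (hv : ∀ n, 0 ≤ v n ∧ v n ≤ C) (h : ∀ᶠ n in atTop, u (n + 1) ≤ c / n + v n) :
    limsup u atTop ≤ limsup v atTop := by
  have hc := tendsto_const_div_atTop_nhds_zero_nat c
  have hv_le : IsBoundedUnder (· ≤ ·) atTop v := isBoundedUnder_of ⟨C, fun n => (hv n).2⟩
  have hv_ge : IsCoboundedUnder (· ≤ ·) atTop v :=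
    isCoboundedUnder_le_of_le atTop fun n => (hv n).1
  calc limsup u atTop = limsup (fun n => u (n + 1)) atTop := (limsup_nat_add u 1).symm
    _ ≤ limsup ((fun n : ℕ => c / n) + v) atTop :=
        limsup_le_limsup h (isCoboundedUnder_le_of_le atTop fun n => hu (n + 1))
          (isBoundedUnder_le_add hc.isBoundedUnder_le hv_le)
    _ ≤ limsup (fun n : ℕ => c / n) atTop + limsup v atTop :=
        limsup_add_le hc.isBoundedUnder_ge hc.isBoundedUnder_le hv_ge hv_le
    _ = limsup v atTop := by rw [hc.limsup_eq, zero_add]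

lemma shift_mem {X : Set (ℤ → A)} (hX : shift '' X = X) {x : ℤ → A} (hx : x ∈ X) :
    shift x ∈ X :=
  hX ▸ mem_image_of_mem shift hx

lemma mem_lang_of_mem_cylP {X : Set (ℤ → A)} {w : List A} {y : ℕ → A} (hy : y ∈ cylP X w) :
    w ∈ Lang X w.length := by
  obtain ⟨⟨x, hx, hxy⟩, hyw⟩ := hy
  exact ⟨rfl, x, hx, fun i => by simpa [← hxy] using hyw i⟩

lemma card_le_of_forall_length_eq [Fintype A] {s : Set (List A)} {n : ℕ}
    (hs : ∀ w ∈ s, w.length = n) : Nat.card s ≤ Fintype.card A ^ n := by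
  calc Nat.card s ≤ Nat.card (List.Vector A n) :=
        Nat.card_le_card_of_injective (fun w => ⟨w.1, hs w.1 w.2⟩)
          fun w w' h => Subtype.ext (congrArg List.Vector.toList h)
    _ = Fintype.card A ^ n := by rw [Nat.card_eq_fintype_card, card_vector]

lemma log_natCast_le_log_natCast {m n : ℕ} (h : m ≤ n) : Real.log m ≤ Real.log n := by
  rcases m.eq_zero_or_pos with rfl | hm
  · simpa using Real.log_natCast_nonneg n
  · exact Real.log_le_log (by exact_mod_cast hm) (by exact_mod_cast h)

def capCounts (X : Set (ℤ → A)) (n : ℕ) : Set ℝ :=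
  { c : ℝ | ∃ r : ℕ, 1 ≤ r ∧ ∃ w ∈ Lang X r, c = (Nat.card ↥(capSet X n r w) : ℝ) }

noncomputable def capRate (X : Set (ℤ → A)) (n : ℕ) : ℝ :=
  Real.log (sSup (capCounts X n)) / n

noncomputable def constraintRate (X : Set (ℤ → A)) (n : ℕ) : ℝ :=
  max 0 (Real.log (Nat.card ↥(LC X n))) / n

lemma capCounts_subset [Fintype A] (X : Set (ℤ → A)) (n : ℕ) :
    capCounts X n ⊆ Nat.cast '' Iic (Fintype.card A ^ n) := by
  rintro _ ⟨r, -, w, -, rfl⟩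
  exact ⟨_, card_le_of_forall_length_eq fun a ha => ha.1.1, rfl⟩

lemma bddAbove_capCounts [Fintype A] (X : Set (ℤ → A)) (n : ℕ) : BddAbove (capCounts X n) :=
  ((finite_Iic _).image _).subset (capCounts_subset X n) |>.bddAbove

lemma exists_sSup_capCounts_eq [Fintype A] (X : Set (ℤ → A)) (n : ℕ) :
    ∃ k ≤ Fintype.card A ^ n, sSup (capCounts X n) = k := by
  rcases (capCounts X n).eq_empty_or_nonempty with h | h
  · exact ⟨0, Nat.zero_le _, by simp [h]⟩
  · obtain ⟨k, hk, hks⟩ := capCounts_subset X n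
      (h.csSup_mem (((finite_Iic _).image _).subset (capCounts_subset X n)))
    exact ⟨k, hk, hks.symm⟩

lemma log_sSup_capCounts_nonneg [Fintype A] (X : Set (ℤ → A)) (n : ℕ) :
    0 ≤ Real.log (sSup (capCounts X n)) := by
  obtain ⟨k, -, hk⟩ := exists_sSup_capCounts_eq X n
  exact hk ▸ Real.log_natCast_nonneg k

lemma capRate_nonneg [Fintype A] (X : Set (ℤ → A)) (n : ℕ) : 0 ≤ capRate X n :=
  div_nonneg (log_sSup_capCounts_nonneg X n) n.cast_nonneg

lemma capRate_le [Fintype A] (X : Set (ℤ → A)) (n : ℕ) :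
    capRate X n ≤ Real.log (Fintype.card A) := by
  obtain ⟨k, hk, hks⟩ := exists_sSup_capCounts_eq X n
  rcases n.eq_zero_or_pos with rfl | hn
  · simpa [capRate] using Real.log_natCast_nonneg _
  rw [capRate, hks, div_le_iff₀ (by exact_mod_cast hn), mul_comm, ← Real.log_pow]
  exact_mod_cast log_natCast_le_log_natCast hk

lemma card_capSet_le_sSup [Fintype A] {X : Set (ℤ → A)} {n r : ℕ} {w : List A}
    (hr : 1 ≤ r) (hw : w.length = r) :
    (Nat.card (capSet X n r w) : ℝ) ≤ sSup (capCounts X n) := by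
  rcases (capSet X n r w).eq_empty_or_nonempty with h | ⟨a, -, ⟨-, -, z, hz, -⟩, -⟩
  · rw [h, Nat.card_of_isEmpty, Nat.cast_zero]
    obtain ⟨k, -, hk⟩ := exists_sSup_capCounts_eq X n
    exact hk ▸ k.cast_nonneg
  · exact le_csSup (bddAbove_capCounts X n) ⟨r, hr, w, hw ▸ mem_lang_of_mem_cylP hz, rfl⟩

lemma shiftP_iterate_apply (r : ℕ) (y : ℕ → A) (k : ℕ) : (shiftP^[r] y) k = y (k + r) := by
  induction r generalizing y with
  | zero => rfl
  | succ r ih => rw [Function.iterate_succ_apply, ih]; rfl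

lemma mapsTo_shiftP_plusShift {X : Set (ℤ → A)} (hX : shift '' X = X) :
    MapsTo shiftP (plusShift X) (plusShift X) := by
  rintro y ⟨x, hx, hxy⟩
  exact ⟨shift x, shift_mem hX hx, fun k => by simp [shiftP, shift, hxy]⟩

lemma tail_mem_capSet {X : Set (ℤ → A)} (hX : shift '' X = X) {a : A} {t : List A}
    (ht : t ≠ []) (h : IsLeftConstraint X (a :: t)) : t ∈ capSet X t.length 1 [a] := by
  obtain ⟨-, hne, hsub⟩ := h
  obtain ⟨-, B, hB, hBw, -⟩ := nonempty_iff_ne_empty.2 hne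
  have hBt : ∀ i : Fin t.length, B ((i : ℕ) + 1 : ℤ) = t.get i := fun i => by
    simpa using hBw i.succ
  have hcyl : (fun k : ℕ => B (k + 1)) ∈ cylP X t :=
    ⟨⟨shift B, shift_mem hX hB, fun k => rfl⟩, hBt⟩
  refine ⟨mem_lang_of_mem_cylP hcyl, ⟨_, hcyl, fun k => B k, ⟨⟨B, hB, fun k => rfl⟩, ?_⟩, ?_⟩, ?_⟩
  · intro i
    simpa [Fin.fin_one_eq_zero i] using hBw 0
  · funext k
    simp [shiftP]
  -- a past `B'` of some `y ∈ fol t \ fol (a :: t)` lies outside `σ₊[a]₊`,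
  -- for otherwise prefixing it by `a` would put `y` in `fol (a :: t)`
  obtain ⟨y, ⟨B', hB', hB't, hyB'⟩, hy⟩ := exists_of_ssubset hsub
  refine ⟨fun k => B' k, ⟨⟨B', hB', fun k => rfl⟩, hB't⟩, ⟨B', hB', fun k => rfl⟩, ?_⟩
  rintro ⟨z, ⟨⟨C, hC, hzC⟩, hza⟩, hzB'⟩
  have hCa : C 0 = a := by simpa [hzC] using hza 0
  have hCB' : ∀ k : ℕ, C (k + 1) = B' k := fun k => by
    simpa [shiftP, hzC] using congrFun hzB' k
  refine hy ⟨C, hC, fun i => ?_, fun k => ?_⟩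
  · cases i using Fin.cases with
    | zero => simpa using hCa
    | succ i => simpa [hCB'] using hB't i
  · obtain ⟨m, hm⟩ : ∃ m, t.length = m + 1 := ⟨t.length - 1, by grind [List.length_pos_iff]⟩
    have hk : ((m + k : ℕ) : ℤ) = (m + 1 : ℕ) - 1 + k := by push_cast; ring
    rw [hyB', List.tail_cons, List.length_cons, hm, ← hk, ← hCB']
    congr 1
    push_cast
    ring

lemma card_LC_succ_le [Fintype A] {X : Set (ℤ → A)} (hX : shift '' X = X) {n : ℕ}
    (hn : 1 ≤ n) : (Nat.card (LC X (n + 1)) : ℝ) ≤ Fintype.card A * sSup (capCounts X n) := by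
  have hfin : ∀ c : A, Finite (capSet X n 1 [c]) := fun c =>
    ((List.finite_length_eq A n).subset fun _ ha => ha.1.1).to_subtype
  let split : LC X (n + 1) → Σ c : A, capSet X n 1 [c] := fun w =>
    ⟨w.1.head w.2.2.1, w.1.tail, by
      have hw : w.1.tail.length = n := by simp [w.2.1]
      have hlc := w.2.2
      rw [← List.cons_head_tail w.2.2.1] at hlc
      have := tail_mem_capSet hX (by rw [← List.length_pos_iff, hw]; exact hn) hlc
      rwa [hw] at this⟩
  have hsplit : split.Injective := fun w w' h => Subtype.ext <| by
    rw [← List.cons_head_tail w.2.2.1, ← List.cons_head_tail w'.2.2.1]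
    exact congr_arg₂ List.cons (congrArg Sigma.fst h)
      (congrArg (fun p : Σ c : A, capSet X n 1 [c] => (p.2 : List A)) h)
  calc (Nat.card (LC X (n + 1)) : ℝ) ≤ ∑ c : A, (Nat.card (capSet X n 1 [c]) : ℝ) := by
        exact_mod_cast (Nat.card_le_card_of_injective split hsplit).trans_eq Nat.card_sigma
    _ ≤ ∑ _c : A, sSup (capCounts X n) :=
        Finset.sum_le_sum fun c _ => card_capSet_le_sSup le_rfl rfl
    _ = Fintype.card A * sSup (capCounts X n) := by simp

lemma constraintRate_succ_le [Fintype A] {X : Set (ℤ → A)} (hX : shift '' X = X) {n : ℕ}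
    (hn : 1 ≤ n) :
    constraintRate X (n + 1) ≤ Real.log (Fintype.card A) / n + capRate X n := by
  set M := sSup (capCounts X n)
  have hM : 0 ≤ Real.log M := log_sSup_capCounts_nonneg X n
  have hlog : max 0 (Real.log (Nat.card (LC X (n + 1)))) ≤
      Real.log (Fintype.card A) + Real.log M := by
    refine max_le (by positivity) ?_
    rcases (Nat.card (LC X (n + 1))).eq_zero_or_pos with h0 | hpos
    · rw [h0, Nat.cast_zero, Real.log_zero]; positivity
    have hle := card_LC_succ_le hX hn
    have hprod : 0 < (Fintype.card A : ℝ) * M := lt_of_lt_of_le (by exact_mod_cast hpos) hle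
    rw [← Real.log_mul (left_ne_zero_of_mul hprod.ne') (right_ne_zero_of_mul hprod.ne')]
    exact Real.log_le_log (by exact_mod_cast hpos) hle
  calc constraintRate X (n + 1) ≤ (Real.log (Fintype.card A) + Real.log M) / (n + 1 : ℕ) :=
        div_le_div_of_nonneg_right hlog (Nat.cast_nonneg _)
    _ ≤ (Real.log (Fintype.card A) + Real.log M) / n :=
        div_le_div_of_nonneg_left (by positivity) (by exact_mod_cast hn) (by simp)
    _ = Real.log (Fintype.card A) / n + capRate X n := add_div _ _ _

theorem hC_le_cap [Fintype A] (X : Set (ℤ → A)) (hX : shift '' X = X) : hC X ≤ cap X :=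
  limsup_le_limsup_of_succ_le_add_div
    (fun n => div_nonneg (le_max_left _ _) n.cast_nonneg)
    (fun n => ⟨capRate_nonneg X n, capRate_le X n⟩)
    (eventually_atTop.2 ⟨1, fun _ hn => constraintRate_succ_le hX hn⟩)

/-- Density zero, yet arbitrarily long intervals. -/
def freeOffsets : Set ℕ := ⋃ k : ℕ, Ico (4 ^ k) (4 ^ k + k)

lemma pow_add_mem_freeOffsets {n j : ℕ} (hj : j < n) : 4 ^ n + j ∈ freeOffsets :=
  mem_iUnion.2 ⟨n, by simp [hj]⟩

lemma pow_add_self_notMem_freeOffsets (n : ℕ) : 4 ^ n + n ∉ freeOffsets := by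
  simp only [freeOffsets, mem_iUnion, mem_Ico, not_exists, not_and, not_lt]
  intro k hk
  rcases lt_trichotomy k n with hkn | rfl | hnk
  · have h1 : 4 ^ k + k < 4 ^ (k + 1) := by
      have := Nat.lt_pow_self (n := k) (by norm_num : 1 < 4); rw [pow_succ]; omega
    have h2 : 4 ^ (k + 1) ≤ 4 ^ n := Nat.pow_le_pow_right (by norm_num) hkn
    omega
  · exact le_rfl
  · have h1 : n < 4 ^ n := Nat.lt_pow_self (by norm_num)
    have h2 : 4 ^ (n + 1) ≤ 4 ^ k := Nat.pow_le_pow_right (by norm_num) hnk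
    rw [pow_succ] at h2
    omega

lemma two_mul_mul_succ_le_four_pow (k : ℕ) : 2 * (k * (k + 1)) ≤ 4 ^ k := by
  induction k with
  | zero => simp
  | succ k ih =>
    rcases k.eq_zero_or_pos with rfl | hk
    · simp
    · rw [pow_succ]; nlinarith

open Classical in
lemma two_mul_card_freeOffsets_le (m : ℕ) :
    2 * ((Finset.range m).filter (· ∈ freeOffsets)).card ≤ m := by
  rcases m.eq_zero_or_pos with rfl | hm
  · simp
  set K := Nat.log 4 m
  have hsub : (Finset.range m).filter (· ∈ freeOffsets) ⊆
      (Finset.range (K + 1)).biUnion fun k => Finset.Ico (4 ^ k) (4 ^ k + k) := by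
    intro d hd
    simp only [Finset.mem_filter, Finset.mem_range, freeOffsets, mem_iUnion, mem_Ico] at hd
    obtain ⟨hdm, k, hk⟩ := hd
    have : k ≤ K := Nat.le_log_of_pow_le (by norm_num) (by omega)
    exact Finset.mem_biUnion.2 ⟨k, Finset.mem_range.2 (by omega), Finset.mem_Ico.2 hk⟩
  have hcard := (Finset.card_le_card hsub).trans
    (Finset.card_biUnion_le_card_mul _ _ K fun k hk => by
      simp only [Nat.card_Ico, Finset.mem_range] at hk ⊢; omega)
  have := two_mul_mul_succ_le_four_pow K
  have := Nat.pow_log_le_self 4 hm.ne'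
  simp only [Finset.card_range] at hcard
  nlinarith

def windowShift : Set (ℤ → Fin 3) :=
  { x | ∀ (i : ℤ) (d : ℕ), 1 ≤ d → x i = 2 →
      (d ∈ freeOffsets → x (i + d) ≠ 2) ∧ (d ∉ freeOffsets → x (i + d) = 0) }

namespace windowShift

lemma comp_add_mem {x : ℤ → Fin 3} (hx : x ∈ windowShift) (t : ℤ) :
    (fun i => x (i + t)) ∈ windowShift := fun i d hd h2 => by
  simpa only [add_right_comm] using hx (i + t) d hd h2

lemma shift_image : shift '' windowShift = windowShift := by
  refine (image_subset_iff.2 fun x hx => show shift x ∈ _ from comp_add_mem hx 1).antisymm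
    fun x hx => ?_
  exact ⟨fun i => x (i + -1), comp_add_mem hx (-1), funext fun i => by simp [shift]⟩

lemma isSubshift : (letI : TopologicalSpace (Fin 3) := ⊥; IsSubshift windowShift) := by
  let _ : TopologicalSpace (Fin 3) := ⊥
  have : DiscreteTopology (Fin 3) := ⟨rfl⟩
  refine ⟨?_, shift_image⟩
  have : windowShift = ⋂ (i : ℤ) (d : ℕ) (_ : 1 ≤ d), (fun x : ℤ → Fin 3 => (x i, x (i + d))) ⁻¹'
      {p | p.1 = 2 → (d ∈ freeOffsets → p.2 ≠ 2) ∧ (d ∉ freeOffsets → p.2 = 0)} := by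
    ext x; simp [windowShift]
  rw [this]
  exact isClosed_iInter fun i => isClosed_iInter fun d => isClosed_iInter fun _ =>
    (isClosed_discrete _).preimage ((continuous_apply i).prodMk (continuous_apply _))

lemma mem_of_eqOn_Ici {x y : ℤ → Fin 3} {i₀ : ℤ} (hx : x ∈ windowShift)
    (hlt : ∀ i < i₀, y i ≠ 2) (hle : ∀ i, i₀ ≤ i → y i = x i) : y ∈ windowShift := by
  intro i d hd h2
  have hi : i₀ ≤ i := by by_contra! h; exact hlt i h h2
  rw [hle i hi] at h2
  rw [hle (i + d) (by omega)]
  exact hx i d hd h2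

def extendZero (y : ℕ → Fin 3) : ℤ → Fin 3
  | (k : ℕ) => y k
  | Int.negSucc _ => 0

lemma mem_plusShift {y : ℕ → Fin 3}
    (hy : ∀ i d : ℕ, 1 ≤ d → y i = 2 →
      (d ∈ freeOffsets → y (i + d) ≠ 2) ∧ (d ∉ freeOffsets → y (i + d) = 0)) :
    y ∈ plusShift windowShift := by
  refine ⟨extendZero y, ?_, fun _ => rfl⟩
  rintro (i | i) d hd h2
  · exact hy i d hd h2
  · exact absurd h2 (by simp [extendZero])

lemma fol_subset_fol_cons {a : Fin 3} (ha : a ≠ 2) {w : List (Fin 3)} (hw : w ≠ []) :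
    fol windowShift w ⊆ fol windowShift (a :: w) := by
  rintro y ⟨B, hB, hBw, hyB⟩
  let B' : ℤ → Fin 3 := fun i => if i = 0 then a else if 0 < i then B (i - 1) else 0
  have hB'pos : ∀ i : ℤ, 1 ≤ i → B' i = B (i + -1) := fun i hi => by
    simp [B', show i ≠ 0 by omega, show 0 < i by omega, sub_eq_add_neg]
  refine ⟨B', mem_of_eqOn_Ici (comp_add_mem hB (-1)) (fun i hi => ?_) hB'pos, fun i => ?_,
    fun k => ?_⟩
  · by_cases h : i = 0 <;> simp [B', h, ha, show ¬ 0 < i by omega]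
  · cases i using Fin.cases with
    | zero => simp [B']
    | succ i => simpa [hB'pos] using hBw i
  · obtain ⟨m, hm⟩ : ∃ m, w.length = m + 1 := ⟨w.length - 1, by grind [List.length_pos_iff]⟩
    rw [hyB, hB'pos _ (by simp [hm]; omega)]
    simp only [List.length_cons, hm]
    push_cast
    ring_nf

lemma mem_LC {m : ℕ} (hm : 2 ≤ m) {w : List (Fin 3)} (hw : w ∈ LC windowShift m) :
    ∃ h : 0 < w.length, w[0] = 2 ∧ ∀ (d : ℕ) (hd : d < w.length), 1 ≤ d →
      (d ∈ freeOffsets → w[d] ≠ 2) ∧ (d ∉ freeOffsets → w[d] = 0) := by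
  obtain ⟨hlen, hne, hfol, hsub⟩ := hw
  have h0 : 0 < w.length := by omega
  obtain ⟨-, B, hB, hBw, -⟩ := nonempty_iff_ne_empty.2 hfol
  have hw0 : w[0] = 2 := by
    obtain ⟨a, t, rfl⟩ := List.exists_cons_of_ne_nil hne
    by_contra ha
    exact hsub.not_subset (fol_subset_fol_cons ha (by grind))
  refine ⟨h0, hw0, fun d hd hd1 => ?_⟩
  have hB0 : B 0 = 2 := by simpa [hw0] using hBw ⟨0, h0⟩
  simpa [hBw ⟨d, hd⟩] using hB 0 d hd1 hB0

lemma eq_of_ne_two_of_eq_one_iff {a b : Fin 3} (ha : a ≠ 2) (hb : b ≠ 2) (h : a = 1 ↔ b = 1) :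
    a = b := by
  revert a b; decide

open Classical in
lemma card_LC_le {m : ℕ} (hm : 2 ≤ m) :
    Nat.card (LC windowShift m) ≤ 2 ^ ((Finset.range m).filter (· ∈ freeOffsets)).card := by
  set F := (Finset.range m).filter (· ∈ freeOffsets)
  have hF : ∀ d ∈ F, d < m ∧ d ∈ freeOffsets := fun d hd => by simpa [F] using hd
  -- a left constraint is determined by which of its free letters are `1`
  let code : LC windowShift m → (F → Bool) := fun w d =>
    decide (w.1[(d : ℕ)]'(by rw [w.2.1]; exact (hF d d.2).1) = 1)
  have hcode : code.Injective := by
    intro w w' h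
    obtain ⟨h0, hw0, hw⟩ := mem_LC hm w.2
    obtain ⟨h0', hw0', hw'⟩ := mem_LC hm w'.2
    refine Subtype.ext (List.ext_getElem (by rw [w.2.1, w'.2.1]) fun d hd hd' => ?_)
    rcases d.eq_zero_or_pos with rfl | hd1
    · rw [hw0, hw0']
    by_cases hS : d ∈ freeOffsets
    · have hdF : d ∈ F := by simp [F, hS, ← w.2.1, hd]
      exact eq_of_ne_two_of_eq_one_iff ((hw d hd hd1).1 hS) ((hw' d hd' hd1).1 hS)
        (decide_eq_decide.1 (congrFun h ⟨d, hdF⟩))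
    · rw [(hw d hd hd1).2 hS, (hw' d hd' hd1).2 hS]
  calc Nat.card (LC windowShift m) ≤ Nat.card (F → Bool) :=
        Nat.card_le_card_of_injective code hcode
    _ = 2 ^ F.card := by simp

lemma constraintRate_le {m : ℕ} (hm : 2 ≤ m) :
    constraintRate windowShift m ≤ Real.log 2 / 2 := by
  classical
  set c := ((Finset.range m).filter (· ∈ freeOffsets)).card
  have hlog : max 0 (Real.log (Nat.card (LC windowShift m))) ≤ c * Real.log 2 := by
    rw [← Real.log_pow]
    refine max_le (Real.log_nonneg (one_le_pow₀ one_le_two)) ?_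
    exact_mod_cast log_natCast_le_log_natCast (card_LC_le hm)
  have hc : (2 * c : ℝ) ≤ m := by exact_mod_cast two_mul_card_freeOffsets_le m
  have hm' : (0 : ℝ) < m := by exact_mod_cast (by omega : 0 < m)
  rw [constraintRate, div_le_div_iff₀ hm' two_pos]
  nlinarith [Real.log_nonneg one_le_two]

lemma hC_le : hC windowShift ≤ Real.log 2 / 2 :=
  limsup_le_of_le
    (isCoboundedUnder_le_of_le atTop fun n => div_nonneg (le_max_left _ _) n.cast_nonneg)
    (eventually_atTop.2 ⟨2, fun _ => constraintRate_le⟩)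

section Window

variable {n : ℕ}

/-- Forces offset `4ⁿ + n` to carry `0` but leaves the window `[4ⁿ, 4ⁿ + n)` free. -/
def markerWord (n : ℕ) : List (Fin 3) :=
  List.ofFn fun i : Fin (4 ^ n) => if (i : ℕ) = 0 then 2 else 0

def freeWord (f : Fin n → Fin 2) : List (Fin 3) :=
  List.ofFn fun i => (f i).castSucc

def padFree (f : Fin n → Fin 2) (j : ℕ) : Fin 3 :=
  if h : j < n then (f ⟨j, h⟩).castSucc else 0

def windowSeq (f : Fin n → Fin 2) (j : ℕ) : Fin 3 :=
  if j = 0 then 2 else if 4 ^ n ≤ j then padFree f (j - 4 ^ n) else 0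

def escapeSeq (f : Fin n → Fin 2) (j : ℕ) : Fin 3 :=
  if j = n then 1 else padFree f j

lemma padFree_ne_two (f : Fin n → Fin 2) (j : ℕ) : padFree f j ≠ 2 := by
  unfold padFree
  split_ifs
  · exact Fin.castSucc_ne_last _
  · decide

lemma windowSeq_mem_cylP (f : Fin n → Fin 2) :
    windowSeq f ∈ cylP windowShift (markerWord n) := by
  refine ⟨mem_plusShift fun i d hd h2 => ?_, fun i => ?_⟩
  · obtain rfl : i = 0 := by
      by_contra hi
      unfold windowSeq at h2
      split_ifs at h2
      exacts [padFree_ne_two f _ h2, absurd h2 (by decide)]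
    simp only [windowSeq, zero_add, show d ≠ 0 by omega, if_false]
    split_ifs with hn
    · refine ⟨fun _ => padFree_ne_two f _, fun hS => dif_neg fun h => hS ?_⟩
      simpa [Nat.add_sub_cancel' hn] using pow_add_mem_freeOffsets (n := n) h
    · exact ⟨fun _ => by decide, fun _ => rfl⟩
  · have hi : (i : ℕ) < 4 ^ n := by simpa [markerWord] using i.2
    show _ = (markerWord n)[(i : ℕ)]
    simp [markerWord, windowSeq, hi.not_ge]

lemma shiftP_windowSeq_mem_cylP (f : Fin n → Fin 2) :
    shiftP^[4 ^ n] (windowSeq f) ∈ cylP windowShift (freeWord f) := by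
  refine ⟨(mapsTo_shiftP_plusShift shift_image).iterate _ (windowSeq_mem_cylP f).1, fun i => ?_⟩
  have hi : (i : ℕ) < n := by simpa [freeWord] using i.2
  show _ = (freeWord f)[(i : ℕ)]
  simp [shiftP_iterate_apply, windowSeq, padFree, freeWord, hi]

lemma escapeSeq_mem_cylP (f : Fin n → Fin 2) : escapeSeq f ∈ cylP windowShift (freeWord f) := by
  refine ⟨mem_plusShift fun i d _ h2 => ?_, fun i => ?_⟩
  · unfold escapeSeq at h2
    split_ifs at h2
    exacts [absurd h2 (by decide), absurd h2 (padFree_ne_two f i)]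
  · have hi : (i : ℕ) < n := by simpa [freeWord] using i.2
    show _ = (freeWord f)[(i : ℕ)]
    simp [escapeSeq, padFree, freeWord, hi, hi.ne]

lemma escapeSeq_notMem (f : Fin n → Fin 2) :
    escapeSeq f ∉ shiftP^[4 ^ n] '' cylP windowShift (markerWord n) := by
  rintro ⟨z, ⟨⟨x, hx, hzx⟩, hz⟩, hze⟩
  have hx0 : x 0 = 2 := by
    simpa [markerWord, hzx] using hz ⟨0, by simp [markerWord]⟩
  have hxn : x (4 ^ n + n) = 1 := by
    simpa [shiftP_iterate_apply, escapeSeq, hzx, add_comm] using congrFun hze n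
  have hd : 1 ≤ 4 ^ n + n := le_add_right (Nat.one_le_pow _ _ four_pos)
  simpa [hxn] using (hx 0 _ hd hx0).2 (pow_add_self_notMem_freeOffsets n)

lemma freeWord_mem_capSet (f : Fin n → Fin 2) :
    freeWord f ∈ capSet windowShift n (4 ^ n) (markerWord n) := by
  refine ⟨by simpa [freeWord] using mem_lang_of_mem_cylP (escapeSeq_mem_cylP f),
    ⟨_, shiftP_windowSeq_mem_cylP f, mem_image_of_mem _ (windowSeq_mem_cylP f)⟩,
    ⟨_, escapeSeq_mem_cylP f, (escapeSeq_mem_cylP f).1, escapeSeq_notMem f⟩⟩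

end Window

lemma two_pow_le_card_capSet (n : ℕ) :
    2 ^ n ≤ Nat.card (capSet windowShift n (4 ^ n) (markerWord n)) := by
  have : Finite (capSet windowShift n (4 ^ n) (markerWord n)) :=
    ((List.finite_length_eq _ n).subset fun _ ha => ha.1.1).to_subtype
  have hinj : Function.Injective fun f : Fin n → Fin 2 =>
      (⟨freeWord f, freeWord_mem_capSet f⟩ : capSet windowShift n (4 ^ n) (markerWord n)) :=
    fun f f' h => funext fun i => Fin.castSucc_injective _ <|
      congrFun (List.ofFn_injective (congrArg Subtype.val h)) i
  simpa using Nat.card_le_card_of_injective _ hinj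

lemma log_two_le_capRate {n : ℕ} (hn : 1 ≤ n) : Real.log 2 ≤ capRate windowShift n := by
  have hmarker : markerWord n ∈ Lang windowShift (4 ^ n) := by
    simpa [markerWord] using mem_lang_of_mem_cylP (windowSeq_mem_cylP fun _ : Fin n => 0)
  have hsup : (2 : ℝ) ^ n ≤ sSup (capCounts windowShift n) :=
    le_csSup_of_le (bddAbove_capCounts _ n) ⟨4 ^ n, Nat.one_le_pow _ _ four_pos, _, hmarker, rfl⟩
      (by exact_mod_cast two_pow_le_card_capSet n)
  have hn' : (0 : ℝ) < n := by exact_mod_cast hn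
  rw [capRate, le_div_iff₀ hn', mul_comm, ← Real.log_pow]
  exact Real.log_le_log (by positivity) hsup

lemma log_two_le_cap : Real.log 2 ≤ cap windowShift :=
  le_limsup_of_frequently_le (eventually_atTop.2 ⟨1, fun _ => log_two_le_capRate⟩).frequently
    (isBoundedUnder_of ⟨_, capRate_le windowShift⟩)

lemma hC_lt_cap : hC windowShift < cap windowShift := by
  have := Real.log_pos one_lt_two
  linarith [hC_le, log_two_le_cap]

end windowShift

/-- For every subshift, `cap(X) ≥ h_𝒞(X)`, and this
inequality can be strict. -/
theorem cap_ge_hC :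
    (∀ (A : Type) [Fintype A] [TopologicalSpace A] [DiscreteTopology A]
        (X : Set (ℤ → A)), IsSubshift X → hC X ≤ cap X) ∧
    (∃ (A : Type) (_ : Fintype A) (X : Set (ℤ → A)),
        (letI : TopologicalSpace A := ⊥
         IsSubshift X) ∧ hC X < cap X) :=
  ⟨fun _ _ _ _ X hX => hC_le_cap X hX.2,
    ⟨Fin 3, inferInstance, windowShift, windowShift.isSubshift, windowShift.hC_lt_cap⟩⟩

end QFTPaper
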